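/- For every d ≥ 3, the closure of ⋃_{n≥d} ℰ_{n,d} equals the convex hull of the set {v_k : k ∈ ℕ, k ≥ 1} ∪ {(1/2!, 1/3!, …, 1/d!)}, where v_k := (C(k,2)/k², C(k,3)/k³, …, C(k,d)/k^d) ∈ ℝ^{d-1}. -/

import Mathlib

/-- The `a`-th elementary symmetric polynomial in `n` variables, evaluated at `x`. -/
noncomputable def esymm (n a : ℕ) (x : Fin n → ℝ) : ℝ :=
  ∑ s ∈ Finset.powersetCard a Finset.univ, ∏ j ∈ s, x j

/-- The vertex `v_k = (C(k,2)/k², …, C(k,d)/k^d)`. -/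
noncomputable def vPt (d k : ℕ) : Fin (d - 1) → ℝ :=
  fun i => (k.choose ((i : ℕ) + 2) : ℝ) / (k : ℝ) ^ ((i : ℕ) + 2)


open Finset Filter

lemma esymm_indicator (n a : ℕ) (K : Finset (Fin n)) (c : ℝ) :
    esymm n a (fun j => if j ∈ K then c else 0) = (K.card.choose a : ℝ) * c ^ a := by
  classical
  unfold esymm
  have h : ∀ s ∈ powersetCard a (univ : Finset (Fin n)),
      (∏ j ∈ s, (if j ∈ K then c else 0)) = if s ⊆ K then c ^ a else 0 := by
    intro s hs
    rw [mem_powersetCard] at hs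
    by_cases hsK : s ⊆ K
    · rw [if_pos hsK, ← hs.2, ← prod_const]
      exact prod_congr rfl fun j hj => if_pos (hsK hj)
    · rw [if_neg hsK]
      obtain ⟨j, hjs, hjK⟩ := Set.not_subset.mp (fun h => hsK (fun y hy => h hy))
      exact prod_eq_zero hjs (if_neg hjK)
  rw [Finset.sum_congr rfl h, ← Finset.sum_filter]
  have hf : (powersetCard a (univ : Finset (Fin n))).filter (· ⊆ K) = powersetCard a K := by
    ext t
    simp only [mem_filter, mem_powersetCard, subset_univ, true_and]
    tauto
  rw [hf, Finset.sum_const, Finset.card_powersetCard, nsmul_eq_mul]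

lemma esymm_update_affine (n a : ℕ) (x : Fin n → ℝ) (i : Fin n) :
    ∃ D E : ℝ, ∀ u, esymm n a (Function.update x i u) = D * u + E := by
  classical
  refine ⟨∑ s ∈ (powersetCard a (univ : Finset (Fin n))).filter (i ∈ ·),
      ∏ l ∈ s.erase i, x l,
    ∑ s ∈ (powersetCard a (univ : Finset (Fin n))).filter (¬ i ∈ ·), ∏ l ∈ s, x l, fun u => ?_⟩
  unfold esymm
  rw [← Finset.sum_filter_add_sum_filter_not (powersetCard a univ) (i ∈ ·), Finset.sum_mul]
  congr 1
  · refine Finset.sum_congr rfl fun s hs => ?_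
    rw [mem_filter] at hs
    rw [← Finset.mul_prod_erase s _ hs.2, Function.update_self]
    rw [mul_comm]
    congr 1
    exact prod_congr rfl fun l hl => Function.update_of_ne (Finset.ne_of_mem_erase hl) _ _
  · refine Finset.sum_congr rfl fun s hs => ?_
    rw [mem_filter] at hs
    refine prod_congr rfl fun l hl => Function.update_of_ne (fun h => hs.2 ?_) _ _
    rwa [← h]

lemma esymm_perm (n a : ℕ) (x : Fin n → ℝ) (σ : Equiv.Perm (Fin n)) :
    esymm n a (x ∘ σ) = esymm n a x := by
  classical
  unfold esymm
  refine Finset.sum_nbij' (fun s => s.map σ.toEmbedding) (fun s => s.map σ.symm.toEmbedding)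
    ?_ ?_ ?_ ?_ ?_
  · intro s hs
    rw [mem_powersetCard] at *
    exact ⟨subset_univ _, by rw [Finset.card_map, hs.2]⟩
  · intro s hs
    rw [mem_powersetCard] at *
    exact ⟨subset_univ _, by rw [Finset.card_map, hs.2]⟩
  · intro s _
    simp only [Finset.map_map]
    ext l
    simp
  · intro s _
    simp only [Finset.map_map]
    ext l
    simp
  · intro s _
    rw [Finset.prod_map]
    rfl

lemma esymm_two_update (n a : ℕ) (x : Fin n → ℝ) {i j : Fin n} (hij : i ≠ j) (s : ℝ) :
    ∃ A K : ℝ, ∀ u,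
      esymm n a (Function.update (Function.update x i u) j (s - u)) = A + K * (u * (s - u)) := by
  classical
  set g : ℝ → ℝ → ℝ := fun u v => esymm n a (Function.update (Function.update x i u) j v) with hg
  have hv : ∀ u v, g u v = g u 0 + (g u 1 - g u 0) * v := by
    intro u
    obtain ⟨D, E, h⟩ := esymm_update_affine n a (Function.update x i u) j
    intro v
    simp only [hg, h]
    ring
  have hu : ∀ u v, g u v = g 0 v + (g 1 v - g 0 v) * u := by
    intro u v
    have hc : ∀ w : ℝ, Function.update (Function.update x i w) j v
        = Function.update (Function.update x j v) i w := fun w => Function.update_comm hij w v x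
    obtain ⟨D, E, h⟩ := esymm_update_affine n a (Function.update x j v) i
    simp only [hg, hc, h]
    ring
  have hswap : (Function.update (Function.update x i 1) j 0) ∘ (Equiv.swap i j)
      = Function.update (Function.update x i 0) j 1 := by
    funext l
    rcases eq_or_ne l i with rfl | hli
    · rw [Function.comp_apply, Equiv.swap_apply_left, Function.update_self,
        Function.update_of_ne hij, Function.update_self]
    · rcases eq_or_ne l j with rfl | hlj
      · rw [Function.comp_apply, Equiv.swap_apply_right, Function.update_of_ne hij,
          Function.update_self, Function.update_self]
      · rw [Function.comp_apply, Equiv.swap_apply_of_ne_of_ne hli hlj,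
          Function.update_of_ne hlj, Function.update_of_ne hli,
          Function.update_of_ne hlj, Function.update_of_ne hli]
  have hsym : g 1 0 = g 0 1 := by
    have := esymm_perm n a (Function.update (Function.update x i 1) j 0) (Equiv.swap i j)
    rw [hswap] at this
    exact this.symm
  refine ⟨g 0 0 + (g 0 1 - g 0 0) * s, g 1 1 - g 0 1 - g 1 0 + g 0 0, fun u => ?_⟩
  have h1 := hv u (s - u)
  have h2 := hu u 0
  have h3 := hu u 1
  have : g u (s - u) = g 0 0 + (g 0 1 - g 0 0) * s
      + (g 1 1 - g 0 1 - g 1 0 + g 0 0) * (u * (s - u)) := by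
    linear_combination h1 + (1 - (s - u)) * h2 + (s - u) * h3 + u * hsym
  exact this

lemma esymm_continuous (n a : ℕ) : Continuous (esymm n a) :=
  continuous_finset_sum _ fun _ _ => continuous_finset_prod _ fun l _ => continuous_apply l


lemma exists_vertex_ge (n d : ℕ) (c : Fin (d - 1) → ℝ) (x : Fin n → ℝ)
    (hx : x ∈ stdSimplex ℝ (Fin n)) :
    ∃ k : ℕ, 1 ≤ k ∧
      ∑ i, c i * esymm n ((i : ℕ) + 2) x ≤ ∑ i, c i * vPt d k i := by
  classical
  set Δ := stdSimplex ℝ (Fin n) with hΔ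
  set f : (Fin n → ℝ) → ℝ := fun y => ∑ i, c i * esymm n ((i : ℕ) + 2) y with hf
  have hfc : Continuous f :=
    continuous_finset_sum _ fun i _ => continuous_const.mul (esymm_continuous n _)
  obtain ⟨z₀, hz₀, hmax₀⟩ :=
    (isCompact_stdSimplex ℝ (Fin n)).exists_isMaxOn ⟨x, hx⟩ hfc.continuousOn
  set P : ℕ → Prop := fun m => ∃ z, (z ∈ Δ ∧ IsMaxOn f Δ z) ∧
      (univ.filter (fun l => z l ≠ 0)).card = m with hPdef
  have hP : ∃ m, P m := ⟨_, z₀, ⟨hz₀, hmax₀⟩, rfl⟩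
  obtain ⟨z, ⟨hzΔ, hzmax⟩, hzcard⟩ := Nat.find_spec hP
  have hzmax' : ∀ w ∈ Δ, f w ≤ f z := isMaxOn_iff.mp hzmax
  have hz0 : ∀ l, 0 ≤ z l := hzΔ.1
  have hzsum : ∑ l, z l = 1 := hzΔ.2
  -- all nonzero coordinates of z are equal
  have heq : ∀ p q : Fin n, z p ≠ 0 → z q ≠ 0 → z p = z q := by
    by_contra hne
    push_neg at hne
    obtain ⟨p, q, hp, hq, hpq⟩ := hne
    have hpq' : p ≠ q := fun h => hpq (by rw [h])
    have hzp : 0 < z p := lt_of_le_of_ne (hz0 p) (Ne.symm hp)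
    have hzq : 0 < z q := lt_of_le_of_ne (hz0 q) (Ne.symm hq)
    set s := z p + z q with hs
    have hspos : 0 < s := add_pos hzp hzq
    set y : ℝ → (Fin n → ℝ) := fun u => Function.update (Function.update z p u) q (s - u)
      with hy
    have hyq : ∀ u, y u q = s - u := fun u => Function.update_self _ _ _
    have hyp : ∀ u, y u p = u := fun u => by
      rw [hy]; simp only
      rw [Function.update_of_ne hpq', Function.update_self]
    have hyl : ∀ u, ∀ l, l ≠ p → l ≠ q → y u l = z l := fun u l hlp hlq => by
      rw [hy]; simp only
      rw [Function.update_of_ne hlq, Function.update_of_ne hlp]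
    have hysum : ∀ u, ∑ l, y u l = 1 := by
      intro u
      have h1 : ∑ l, y u l = y u q + ∑ l ∈ univ.erase q, y u l :=
        (Finset.add_sum_erase univ _ (mem_univ q)).symm
      have hp' : p ∈ univ.erase q := mem_erase.mpr ⟨hpq', mem_univ p⟩
      have h3 : ∑ l ∈ univ.erase q, y u l = y u p + ∑ l ∈ (univ.erase q).erase p, y u l :=
        (Finset.add_sum_erase _ _ hp').symm
      have h5 : ∑ l ∈ (univ.erase q).erase p, y u l = ∑ l ∈ (univ.erase q).erase p, z l :=
        Finset.sum_congr rfl fun l hl =>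
          hyl u l (Finset.ne_of_mem_erase hl)
            (Finset.ne_of_mem_erase (Finset.mem_of_mem_erase hl))
      have h2 : (1:ℝ) = z q + ∑ l ∈ univ.erase q, z l := by
        rw [Finset.add_sum_erase univ _ (mem_univ q), hzsum]
      have h4 : ∑ l ∈ univ.erase q, z l = z p + ∑ l ∈ (univ.erase q).erase p, z l :=
        (Finset.add_sum_erase _ _ hp').symm
      rw [h1, h3, h5, hyq, hyp]
      rw [h4] at h2
      linarith
    have hym : ∀ u, 0 ≤ u → u ≤ s → y u ∈ Δ := by
      intro u hu0 hus
      refine ⟨fun l => ?_, hysum u⟩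
      rcases eq_or_ne l q with rfl | hlq
      · rw [hyq]; linarith
      rcases eq_or_ne l p with rfl | hlp
      · rw [hyp]; exact hu0
      · rw [hyl u l hlp hlq]; exact hz0 l
    choose A K hAK using fun i : Fin (d - 1) => esymm_two_update n ((i : ℕ) + 2) z hpq' s
    set α := ∑ i, c i * A i with hα
    set β := ∑ i, c i * K i with hβ
    have hFy : ∀ u, f (y u) = α + β * (u * (s - u)) := by
      intro u
      have : ∀ i : Fin (d-1), c i * esymm n ((i : ℕ) + 2) (y u)
          = c i * A i + (c i * K i) * (u * (s - u)) := by
        intro i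
        rw [hy]; simp only
        rw [hAK i u]; ring
      rw [hf]; simp only
      rw [Finset.sum_congr rfl fun i _ => this i, Finset.sum_add_distrib, ← Finset.sum_mul]
    have hzy : z = y (z p) := by
      rw [hy]; simp only
      rw [Function.update_eq_self]
      have : s - z p = z q := by rw [hs]; ring
      rw [this, Function.update_eq_self]
    have hfz : f z = α + β * (z p * z q) := by
      have h := hFy (z p)
      rw [← hzy] at h
      have h2 : s - z p = z q := by rw [hs]; ring
      rw [h, h2]
    rcases le_or_gt β 0 with hβ0 | hβ0
    · -- y 0 is also a maximizer, with smaller support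
      have h0m : y 0 ∈ Δ := hym 0 le_rfl hspos.le
      have hfy0 : f z ≤ f (y 0) := by
        have h1 : f (y 0) = α := by rw [hFy]; ring_nf
        have h2 : β * (z p * z q) ≤ 0 := mul_nonpos_of_nonpos_of_nonneg hβ0
          (le_of_lt (mul_pos hzp hzq))
        rw [h1, hfz]; linarith
      have hmax2 : IsMaxOn f Δ (y 0) :=
        isMaxOn_iff.mpr fun w hw => (hzmax' w hw).trans hfy0
      have hfilt : univ.filter (fun l => y 0 l ≠ 0)
          = (univ.filter (fun l => z l ≠ 0)).erase p := by
        ext l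
        rcases eq_or_ne l p with rfl | hlp
        · simp only [Finset.mem_erase, mem_filter, mem_univ, true_and, ne_eq,
            not_true_eq_false, false_and, iff_false]
          rw [hyp]
          simp
        rcases eq_or_ne l q with rfl | hlq
        · simp only [Finset.mem_erase, mem_filter, mem_univ, true_and, ne_eq]
          rw [hyq]
          have h1 : s - 0 ≠ 0 := by intro h; rw [sub_zero] at h; exact hspos.ne' h
          simp [h1, hpq'.symm, hq, hspos.ne']
        · simp only [Finset.mem_erase, mem_filter, mem_univ, true_and, ne_eq]
          rw [hyl 0 l hlp hlq]
          simp [hlp]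
      have hpmem : p ∈ univ.filter (fun l => z l ≠ 0) := by
        simp [hp]
      have hcard2 : (univ.filter (fun l => y 0 l ≠ 0)).card = Nat.find hP - 1 := by
        rw [hfilt, Finset.card_erase_of_mem hpmem, hzcard]
      have hpos : 0 < Nat.find hP := by
        rw [← hzcard]
        exact Finset.card_pos.mpr ⟨p, hpmem⟩
      exact absurd ⟨y 0, ⟨h0m, hmax2⟩, hcard2⟩
        (Nat.find_min hP (Nat.sub_lt hpos one_pos))
    · -- β > 0 : mid point beats the max, contradiction
      have hmid : y (s/2) ∈ Δ := hym (s/2) (by linarith) (by linarith)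
      have hle := hzmax' _ hmid
      rw [hFy, hfz] at hle
      rw [hs] at hle
      have hsq : 0 < (z p - z q)^2 :=
        lt_of_le_of_ne (sq_nonneg _) (Ne.symm (pow_ne_zero 2 (sub_ne_zero.mpr hpq)))
      nlinarith [hsq, hβ0]
  -- z is uniform on its support
  set Kf := univ.filter (fun l => z l ≠ 0) with hKf
  obtain ⟨l₀, _, hl₀⟩ := Finset.exists_ne_zero_of_sum_ne_zero (by rw [hzsum]; exact one_ne_zero)
  have hKne : Kf.Nonempty := ⟨l₀, by simp [hKf, hl₀]⟩
  set k := Kf.card with hk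
  have hk1 : 1 ≤ k := Finset.card_pos.mpr hKne
  have hkR : (0:ℝ) < (k:ℝ) := by exact_mod_cast hk1
  have hsumK : ∑ l ∈ Kf, z l = 1 := by
    rw [hKf, Finset.sum_filter_ne_zero, hzsum]
  have hval : ∀ l ∈ Kf, z l = z l₀ := fun l hl =>
    heq l l₀ (by simpa [hKf] using hl) hl₀
  have hl₀val : z l₀ = 1 / (k:ℝ) := by
    rw [Finset.sum_congr rfl hval, Finset.sum_const, ← hk, nsmul_eq_mul] at hsumK
    field_simp at hsumK ⊢
    linarith
  have hzz : z = fun l => if l ∈ Kf then (1/(k:ℝ)) else 0 := by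
    funext l
    by_cases hl : l ∈ Kf
    · rw [if_pos hl, hval l hl, hl₀val]
    · rw [if_neg hl]
      by_contra h
      exact hl (by simp [hKf, h])
  refine ⟨k, hk1, ?_⟩
  have hfv : f z = ∑ i, c i * vPt d k i := by
    rw [hf]; simp only
    refine Finset.sum_congr rfl fun i _ => ?_
    rw [hzz, esymm_indicator, ← hk, vPt, div_pow, one_pow, mul_one_div]
  rw [← hfv]
  exact hzmax' x hx

lemma extend_mem_simplex {n N : ℕ} (h : n ≤ N) {x : Fin n → ℝ}
    (hx : x ∈ stdSimplex ℝ (Fin n)) :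
    (fun j : Fin N => if hj : (j : ℕ) < n then x ⟨j, hj⟩ else 0) ∈ stdSimplex ℝ (Fin N) := by
  classical
  set X : Fin N → ℝ := fun j => if hj : (j : ℕ) < n then x ⟨j, hj⟩ else 0 with hX
  set F : Finset (Fin N) := univ.map (Fin.castLEEmb h) with hF
  have hmemF : ∀ j : Fin N, j ∈ F ↔ (j : ℕ) < n := by
    intro j
    simp only [hF, Finset.mem_map, Finset.mem_univ, true_and]
    constructor
    · rintro ⟨i, rfl⟩; simpa using i.isLt
    · intro hj; exact ⟨⟨(j : ℕ), hj⟩, Fin.ext (by simp)⟩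
  refine ⟨fun j => ?_, ?_⟩
  · by_cases hj : (j : ℕ) < n
    · simp only [hX, dif_pos hj]; exact hx.1 _
    · simp only [hX, dif_neg hj]; exact le_rfl
  · have h1 : ∑ j, X j = ∑ j ∈ F, X j := by
      refine (Finset.sum_subset (Finset.subset_univ F) fun j _ hj => ?_).symm
      have : ¬ (j : ℕ) < n := fun hc => hj ((hmemF j).mpr hc)
      simp only [hX, dif_neg this]
    rw [h1, hF, Finset.sum_map]
    rw [← hx.2]
    refine Finset.sum_congr rfl fun i _ => ?_
    simp only [hX]
    rw [dif_pos (by simpa using i.isLt : ((Fin.castLEEmb h) i : ℕ) < n)]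
    apply congrArg
    ext
    simp

lemma esymm_extend {n N : ℕ} (h : n ≤ N) (a : ℕ) (x : Fin n → ℝ) :
    esymm N a (fun j : Fin N => if hj : (j : ℕ) < n then x ⟨j, hj⟩ else 0) = esymm n a x := by
  classical
  set X : Fin N → ℝ := fun j => if hj : (j : ℕ) < n then x ⟨j, hj⟩ else 0 with hX
  set F : Finset (Fin N) := univ.map (Fin.castLEEmb h) with hF
  have hmemF : ∀ j : Fin N, j ∈ F ↔ (j : ℕ) < n := by
    intro j
    simp only [hF, Finset.mem_map, Finset.mem_univ, true_and]
    constructor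
    · rintro ⟨i, rfl⟩; simpa using i.isLt
    · intro hj; exact ⟨⟨(j : ℕ), hj⟩, Fin.ext (by simp)⟩
  unfold esymm
  have h1 : ∑ s ∈ powersetCard a (univ : Finset (Fin N)), ∏ j ∈ s, X j
      = ∑ s ∈ powersetCard a F, ∏ j ∈ s, X j := by
    refine (Finset.sum_subset (Finset.powersetCard_mono (Finset.subset_univ F)) ?_).symm
    intro s hs hsF
    rw [mem_powersetCard] at hs hsF
    have : ¬ s ⊆ F := fun hc => hsF ⟨hc, hs.2⟩
    obtain ⟨j, hjs, hjF⟩ := Set.not_subset.mp (fun hc => this fun y hy => hc hy)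
    refine Finset.prod_eq_zero hjs ?_
    have : ¬ (j : ℕ) < n := fun hc => hjF ((hmemF j).mpr hc)
    simp only [hX, dif_neg this]
  rw [h1, hF, Finset.powersetCard_map, Finset.sum_map]
  refine Finset.sum_congr rfl fun t _ => ?_
  show ∏ j ∈ t.map (Fin.castLEEmb h), X j = ∏ j ∈ t, x j
  rw [Finset.prod_map]
  refine Finset.prod_congr rfl fun i _ => ?_
  simp only [hX]
  rw [dif_pos (by simpa using i.isLt : ((Fin.castLEEmb h) i : ℕ) < n)]
  apply congrArg
  ext
  simp

lemma vPt_tendsto (d : ℕ) :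
    Tendsto (fun k => vPt d k) atTop
      (nhds (fun i : Fin (d - 1) => 1 / (Nat.factorial ((i : ℕ) + 2) : ℝ))) := by
  rw [tendsto_pi_nhds]
  intro i
  set a : ℕ := (i : ℕ) + 2 with ha
  have key : ∀ᶠ k : ℕ in atTop, vPt d k i
      = (1 / (a.factorial : ℝ)) * ∏ r ∈ range a, (1 - (r : ℝ) / (k : ℝ)) := by
    filter_upwards [eventually_ge_atTop a, eventually_ge_atTop 1] with k hka hk1
    have hk0 : (0:ℝ) < (k : ℝ) := by exact_mod_cast hk1
    have hdesc : (k.descFactorial a : ℝ) = ∏ r ∈ range a, ((k:ℝ) - r) := by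
      rw [Nat.descFactorial_eq_prod_range, Nat.cast_prod]
      refine prod_congr rfl fun r hr => ?_
      rw [Nat.cast_sub (le_trans (le_of_lt (mem_range.mp hr)) hka)]
    have hchoose : (k.choose a : ℝ) = (∏ r ∈ range a, ((k:ℝ) - r)) / (a.factorial : ℝ) := by
      rw [← hdesc, Nat.descFactorial_eq_factorial_mul_choose, Nat.cast_mul]
      field_simp
    have hsplit : ∏ r ∈ range a, (1 - (r : ℝ) / (k : ℝ))
        = (∏ r ∈ range a, ((k:ℝ) - r)) / (k:ℝ) ^ a := by
      have : ∀ r ∈ range a, (1 - (r : ℝ) / (k : ℝ)) = ((k:ℝ) - r) / (k:ℝ) := by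
        intro r _
        field_simp
      rw [prod_congr rfl this, prod_div_distrib, prod_const, card_range]
    show (k.choose a : ℝ) / (k : ℝ) ^ a = _
    rw [hchoose, hsplit]
    have hfac : (0:ℝ) < (a.factorial : ℝ) := by exact_mod_cast a.factorial_pos
    field_simp
  refine Tendsto.congr' (key.mono fun k hk => hk.symm) ?_
  have hlim : Tendsto (fun k : ℕ => ∏ r ∈ range a, (1 - (r : ℝ) / (k : ℝ))) atTop
      (nhds (∏ r ∈ range a, (1:ℝ))) := by
    refine tendsto_finset_prod _ fun r _ => ?_
    have := tendsto_const_div_atTop_nhds_zero_nat (r : ℝ)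
    have h2 : Tendsto (fun k : ℕ => 1 - (r:ℝ)/(k:ℝ)) atTop (nhds (1 - 0)) :=
      tendsto_const_nhds.sub this
    simpa using h2
  have := hlim.const_mul (1 / (a.factorial : ℝ))
  simpa using this

lemma isCompact_convexHull_pi {m : ℕ} {T : Set (Fin m → ℝ)} (hT : IsCompact T) :
    IsCompact (convexHull ℝ T) := by
  classical
  rcases T.eq_empty_or_nonempty with rfl | ⟨t₀, ht₀⟩
  · simp only [convexHull_empty]
    exact isCompact_empty
  set N : ℕ := m + 1 with hN
  set g : (Fin N → ℝ) × (Fin N → (Fin m → ℝ)) → (Fin m → ℝ) :=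
    fun p => ∑ j : Fin N, p.1 j • p.2 j with hg
  have hgc : Continuous g :=
    continuous_finset_sum _ fun j _ =>
      ((continuous_apply j).comp continuous_fst).smul ((continuous_apply j).comp continuous_snd)
  set K : Set ((Fin N → ℝ) × (Fin N → (Fin m → ℝ))) :=
    (stdSimplex ℝ (Fin N)) ×ˢ (Set.univ.pi fun _ : Fin N => T) with hK
  have hKc : IsCompact K := (isCompact_stdSimplex ℝ _).prod (isCompact_univ_pi fun _ => hT)
  have himg : convexHull ℝ T = g '' K := by
    apply Set.Subset.antisymm
    · intro v hv
      obtain ⟨ι, hι, z, w, hzT, hai, hwpos, hw1, hcomb⟩ :=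
        eq_pos_convex_span_of_mem_convexHull hv
      have hcard : Fintype.card ι ≤ N := by
        have h1 := hai.card_le_finrank_succ
        have h2 : Module.finrank ℝ ↥(vectorSpan ℝ (Set.range z)) ≤ m := by
          have := Submodule.finrank_le (vectorSpan ℝ (Set.range z))
          rwa [Module.finrank_pi, Fintype.card_fin] at this
        omega
      obtain ⟨e⟩ : Nonempty (ι ↪ Fin N) :=
        Function.Embedding.nonempty_of_card_le (by simpa using hcard)
      set w' : Fin N → ℝ := fun j => if h : ∃ i, e i = j then w h.choose else 0 with hw'
      set z' : Fin N → (Fin m → ℝ) := fun j => if h : ∃ i, e i = j then z h.choose else t₀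
        with hz'
      have hwe : ∀ i : ι, w' (e i) = w i := by
        intro i
        have h : ∃ i', e i' = e i := ⟨i, rfl⟩
        simp only [hw', dif_pos h]
        rw [e.injective h.choose_spec]
      have hze : ∀ i : ι, z' (e i) = z i := by
        intro i
        have h : ∃ i', e i' = e i := ⟨i, rfl⟩
        simp only [hz', dif_pos h]
        rw [e.injective h.choose_spec]
      have hrange : ∀ j : Fin N, j ∉ Finset.univ.map e → w' j = 0 := by
        intro j hj
        have : ¬ ∃ i, e i = j := by
          intro ⟨i, hi⟩
          exact hj (Finset.mem_map.mpr ⟨i, Finset.mem_univ i, hi⟩)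
        simp only [hw', dif_neg this]
      have hsum' : ∀ f : (Fin N) → ℝ, (∀ j ∉ Finset.univ.map e, f j = 0) →
          ∑ j : Fin N, f j = ∑ i : ι, f (e i) := by
        intro f hf
        rw [← Finset.sum_map Finset.univ e f]
        exact (Finset.sum_subset (Finset.subset_univ _) fun j _ hj => hf j hj).symm
      have hsumv : ∀ f : (Fin N) → (Fin m → ℝ), (∀ j ∉ Finset.univ.map e, f j = 0) →
          ∑ j : Fin N, f j = ∑ i : ι, f (e i) := by
        intro f hf
        rw [← Finset.sum_map Finset.univ e f]
        exact (Finset.sum_subset (Finset.subset_univ _) fun j _ hj => hf j hj).symm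
      have hw'mem : w' ∈ stdSimplex ℝ (Fin N) := by
        refine ⟨fun j => ?_, ?_⟩
        · by_cases h : ∃ i, e i = j
          · simp only [hw', dif_pos h]; exact (hwpos _).le
          · simp only [hw', dif_neg h]
            exact le_rfl
        · rw [hsum' w' hrange, Finset.sum_congr rfl fun i _ => hwe i]
          exact hw1
      have hz'mem : ∀ j, z' j ∈ T := by
        intro j
        by_cases h : ∃ i, e i = j
        · simp only [hz', dif_pos h]
          exact hzT ⟨h.choose, rfl⟩
        · simp only [hz', dif_neg h]; exact ht₀
      refine ⟨(w', z'), ⟨hw'mem, fun j _ => hz'mem j⟩, ?_⟩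
      simp only [hg]
      rw [hsumv (fun j => w' j • z' j) (fun j hj => by show w' j • z' j = 0; rw [hrange j hj, zero_smul])]
      rw [Finset.sum_congr rfl fun i _ => by rw [hwe i, hze i]]
      exact hcomb
    · rintro _ ⟨⟨w, z⟩, ⟨hw, hz⟩, rfl⟩
      exact (convex_convexHull ℝ T).sum_mem (fun j _ => hw.1 j) hw.2
        (fun j _ => subset_convexHull ℝ T (hz j (Set.mem_univ j)))
  rw [himg]
  exact hKc.image hgc

/-- **Proposition 5.4.** For `d ≥ 3`, the limit `ℰ_d = closure (⋃_{n ≥ d} ℰ_{n,d})` of the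
convex hulls of the images `(e₂,…,e_d)(Δ_{n-1})` equals the convex hull of the points
`v_k`, `k ≥ 1`, together with their accumulation point `(1/2!, 1/3!, …, 1/d!)`. -/
theorem limit_convex_hull_of_elementary_images (d : ℕ) (hd : 3 ≤ d) :
    closure (⋃ n : ℕ, ⋃ (_ : d ≤ n),
        convexHull ℝ ((fun (x : Fin n → ℝ) (i : Fin (d - 1)) => esymm n ((i : ℕ) + 2) x) ''
          stdSimplex ℝ (Fin n))) =
      convexHull ℝ
        (insert (fun i : Fin (d - 1) => 1 / (Nat.factorial ((i : ℕ) + 2) : ℝ))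
          {v : Fin (d - 1) → ℝ | ∃ k : ℕ, 1 ≤ k ∧ v = vPt d k}) := by
  classical
  set S : ℕ → Set (Fin (d - 1) → ℝ) := fun n =>
    (fun (x : Fin n → ℝ) (i : Fin (d - 1)) => esymm n ((i : ℕ) + 2) x) ''
      stdSimplex ℝ (Fin n) with hS
  set U : Set (Fin (d - 1) → ℝ) := ⋃ n : ℕ, ⋃ (_ : d ≤ n), convexHull ℝ (S n) with hU
  set limPt : Fin (d - 1) → ℝ := fun i => 1 / (Nat.factorial ((i : ℕ) + 2) : ℝ) with hlimPt
  set V : Set (Fin (d - 1) → ℝ) := {v | ∃ k : ℕ, 1 ≤ k ∧ v = vPt d k} with hV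
  set T : Set (Fin (d - 1) → ℝ) := insert limPt V with hT
  show closure U = convexHull ℝ T
  -- monotonicity of the images
  have hSmono : ∀ {n N : ℕ}, n ≤ N → S n ⊆ S N := by
    rintro n N h _ ⟨x, hx, rfl⟩
    exact ⟨fun j => if hj : (j : ℕ) < n then x ⟨j, hj⟩ else 0, extend_mem_simplex h hx,
      funext fun i => esymm_extend h _ x⟩
  -- U is convex
  have hUconvex : Convex ℝ U := by
    intro p hp q hq a b ha hb hab
    rw [hU, Set.mem_iUnion₂] at hp hq
    obtain ⟨n₁, hd₁, hp'⟩ := hp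
    obtain ⟨n₂, hd₂, hq'⟩ := hq
    have h1 : convexHull ℝ (S n₁) ⊆ convexHull ℝ (S (max n₁ n₂)) :=
      convexHull_mono (hSmono (le_max_left _ _))
    have h2 : convexHull ℝ (S n₂) ⊆ convexHull ℝ (S (max n₁ n₂)) :=
      convexHull_mono (hSmono (le_max_right _ _))
    have := (convex_convexHull ℝ (S (max n₁ n₂))) (h1 hp') (h2 hq') ha hb hab
    rw [hU, Set.mem_iUnion₂]
    exact ⟨max n₁ n₂, le_trans hd₁ (le_max_left _ _), this⟩
  -- the vertices belong to U
  have hvU : ∀ k : ℕ, 1 ≤ k → vPt d k ∈ U := by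
    intro k hk
    have hkR : (0:ℝ) < (k : ℝ) := by exact_mod_cast hk
    set n := max d k with hn
    have hkn : k ≤ n := le_max_right _ _
    have hdn : d ≤ n := le_max_left _ _
    have hu : (fun _ : Fin k => 1/(k:ℝ)) ∈ stdSimplex ℝ (Fin k) := by
      refine ⟨fun _ => by positivity, ?_⟩
      rw [Finset.sum_const, card_univ, Fintype.card_fin, nsmul_eq_mul]
      field_simp
    have hX := extend_mem_simplex hkn hu
    have hΦX : (fun (x : Fin n → ℝ) (i : Fin (d - 1)) => esymm n ((i : ℕ) + 2) x)
        (fun j : Fin n => if hj : (j : ℕ) < k then (1/(k:ℝ)) else 0) = vPt d k := by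
      funext i
      have h1 := esymm_extend hkn ((i : ℕ) + 2) (fun _ : Fin k => 1/(k:ℝ))
      have h2 := esymm_indicator k ((i : ℕ) + 2) Finset.univ (1/(k:ℝ))
      simp only [Finset.mem_univ, if_true, card_univ, Fintype.card_fin] at h2
      show esymm n ((i : ℕ) + 2) _ = vPt d k i
      rw [h1, h2, vPt, div_pow, one_pow, mul_one_div]
    rw [hU, Set.mem_iUnion₂]
    exact ⟨n, hdn, subset_convexHull ℝ _ ⟨_, hX, hΦX⟩⟩
  -- T is contained in the closure of U
  have hTcl : T ⊆ closure U := by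
    intro v hv
    rcases hv with rfl | hv
    · exact mem_closure_of_tendsto (vPt_tendsto d)
        (eventually_atTop.mpr ⟨1, fun k hk => hvU k hk⟩)
    · obtain ⟨k, hk, rfl⟩ := hv
      exact subset_closure (hvU k hk)
  -- T is compact
  have hVrange : V = Set.range (fun j : ℕ => vPt d (j + 1)) := by
    ext v
    simp only [hV, Set.mem_setOf_eq, Set.mem_range]
    constructor
    · rintro ⟨k, hk, rfl⟩
      exact ⟨k - 1, by rw [Nat.sub_add_cancel hk]⟩
    · rintro ⟨j, rfl⟩
      exact ⟨j + 1, Nat.le_add_left 1 j, rfl⟩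
  have hTcompact : IsCompact T := by
    rw [hT, hVrange]
    exact Filter.Tendsto.isCompact_insert_range
      ((vPt_tendsto d).comp (tendsto_add_atTop_nat 1))
  have hclosed : IsClosed (convexHull ℝ T) := (isCompact_convexHull_pi hTcompact).isClosed
  -- U is contained in the convex hull of T
  have hsub : U ⊆ convexHull ℝ T := by
    rw [hU]
    refine Set.iUnion₂_subset fun n hdn => ?_
    refine convexHull_min ?_ (convex_convexHull ℝ T)
    rintro _ ⟨x, hx, rfl⟩
    by_contra hp
    obtain ⟨ℓ, u, hu1, hu2⟩ :=
      geometric_hahn_banach_closed_point (convex_convexHull ℝ T) hclosed hp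
    set c : Fin (d - 1) → ℝ := fun i => ℓ (fun j => if i = j then (1:ℝ) else 0) with hc
    have hrep : ∀ p : Fin (d - 1) → ℝ, ℓ p = ∑ i, c i * p i := by
      intro p
      conv_lhs => rw [pi_eq_sum_univ p]
      rw [map_sum]
      refine Finset.sum_congr rfl fun i _ => ?_
      rw [map_smul, smul_eq_mul, mul_comm]
    obtain ⟨k, hk1, hkineq⟩ := exists_vertex_ge n d c x hx
    have hle : ℓ ((fun (x : Fin n → ℝ) (i : Fin (d - 1)) => esymm n ((i : ℕ) + 2) x) x)
        ≤ ℓ (vPt d k) := by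
      rw [hrep, hrep]
      exact hkineq
    have hvT : vPt d k ∈ convexHull ℝ T :=
      subset_convexHull ℝ T (Set.mem_insert_of_mem _ ⟨k, hk1, rfl⟩)
    have := hu1 _ hvT
    linarith
  exact Set.Subset.antisymm (closure_minimal hsub hclosed) (convexHull_min hTcl hUconvex.closure)
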